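/- With embedding map I^{(2)}_{M→2M} e_M^m = (e_{2M}^{2m} + e_{2M}^{2m+1})/√2, the multiplication operators Û_M (by e^{2πim/M}) are NOT weakly cylindrically consistent: for the associated sesquilinear forms one has U_{2M}(I^{(2)}_{M→2M} e_M^m, I^{(2)}_{M→2M} e_M^n) = (1/2)(e^{2πim/M} + e^{2πi(m+1/2)/M}) δ_{mn}, which differs from U_M(e_M^m, e_M^n) = e^{2πim/M} δ_{mn}. -/

import Mathlib

/-- The orthonormal basis vector e_M^m = √M δ^m of ℂ^M. -/
noncomputable def eVec (M : ℕ) (m : ZMod M) : ZMod M → ℂ :=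
  fun a => if a = m then (Real.sqrt M : ℂ) else 0

/-- The embedding I^{(2)}_{M→2M} : ℂ^M → ℂ^{2M}, determined on the ONB by
e_M^m ↦ (e_{2M}^{2m} + e_{2M}^{2m+1})/√2; on functions: (I f)(n) = f(⌊n/2⌋). -/
def embed2 (M : ℕ) (f : ZMod M → ℂ) : ZMod (2 * M) → ℂ :=
  fun n => f ((n.val / 2 : ℕ) : ZMod M)

/-- The sesquilinear form U_N(f,g) = ⟨f, Û_N g⟩ of the multiplication operator
Û_N (by e^{2πim/N}) with respect to the normalized inner product on ℂ^N. -/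
noncomputable def Uform (N : ℕ) [NeZero N] (f g : ZMod N → ℂ) : ℂ :=
  (1 / (N : ℂ)) * ∑ m : ZMod N,
    (starRingEnd ℂ) (f m) * (Complex.exp (2 * Real.pi * Complex.I * m.val / N) * g m)

/-!
On the finer lattice, `embed2` spreads `e_M^m` over the two sites `2m` and `2m + 1`, where the
phases of `Û_{2M}` are `e^{2πim/M}` and `e^{2πi(m+1/2)/M}`; the flowed kernel is therefore their
average. At `m = 0` this average is `(1 + ω)/2` with `ω = e^{2πi/(2M)}` a primitive `2M`-th root of
unity, so it cannot equal `1`.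
-/

open Complex Finset

namespace ZMod

variable {M : ℕ} [NeZero M]

lemma natCast_val_div_two_eq_iff (k : ZMod (2 * M)) (j : ZMod M) :
    ((k.val / 2 : ℕ) : ZMod M) = j ↔ k = (2 * j.val : ℕ) ∨ k = (2 * j.val + 1 : ℕ) := by
  have hk := k.val_lt
  have hj := j.val_lt
  rw [← (val_injective M).eq_iff, val_natCast_of_lt (by omega), ← (val_injective _).eq_iff,
    ← (val_injective _).eq_iff, val_natCast_of_lt (by omega), val_natCast_of_lt (by omega)]
  omega

lemma sum_two_mul {β : Type*} [AddCommMonoid β] (f : ZMod (2 * M) → β) :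
    ∑ k, f k = ∑ j : ZMod M, (f (2 * j.val : ℕ) + f (2 * j.val + 1 : ℕ)) := by
  rw [← sum_fiberwise univ (fun k : ZMod (2 * M) => ((k.val / 2 : ℕ) : ZMod M))]
  refine sum_congr rfl fun j _ => ?_
  have hj := j.val_lt
  have hne : ((2 * j.val : ℕ) : ZMod (2 * M)) ≠ (2 * j.val + 1 : ℕ) := fun h => by
    have := congrArg val h
    rw [val_natCast_of_lt (by omega), val_natCast_of_lt (by omega)] at this
    omega
  rw [← sum_pair hne]
  congr 1
  ext k
  simp [natCast_val_div_two_eq_iff]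

end ZMod

lemma conj_eVec_mul_eVec {M : ℕ} (m n a : ZMod M) :
    starRingEnd ℂ (eVec M m a) * eVec M n a =
      (M : ℂ) * ((if a = m then 1 else 0) * (if m = n then 1 else 0)) := by
  have hsq : (Real.sqrt M : ℂ) * Real.sqrt M = M := by
    rw [← ofReal_mul, Real.mul_self_sqrt (Nat.cast_nonneg M), ofReal_natCast]
  unfold eVec
  split_ifs <;> simp_all

variable {M : ℕ} [NeZero M]

lemma embed2_natCast_two_mul (f : ZMod M → ℂ) (j : ZMod M) :
    embed2 M f (2 * j.val : ℕ) = f j := by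
  have hj := j.val_lt
  rw [embed2, ZMod.val_natCast_of_lt (by omega), Nat.mul_div_cancel_left _ two_pos,
    ZMod.natCast_zmod_val]

lemma embed2_natCast_two_mul_add_one (f : ZMod M → ℂ) (j : ZMod M) :
    embed2 M f (2 * j.val + 1 : ℕ) = f j := by
  have hj := j.val_lt
  rw [embed2, ZMod.val_natCast_of_lt (by omega), Nat.mul_add_div two_pos, Nat.div_eq_of_lt one_lt_two,
    add_zero, ZMod.natCast_zmod_val]

lemma sum_conj_eVec_mul_eVec (c : ZMod M → ℂ) (m n : ZMod M) :
    ∑ a, starRingEnd ℂ (eVec M m a) * (c a * eVec M n a) = M * (c m * if m = n then 1 else 0) := by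
  calc ∑ a, starRingEnd ℂ (eVec M m a) * (c a * eVec M n a)
      = ∑ a, if a = m then M * (c a * if m = n then 1 else 0) else 0 := by
        refine sum_congr rfl fun a _ => ?_
        rw [mul_left_comm, conj_eVec_mul_eVec]
        split_ifs <;> ring
    _ = M * (c m * if m = n then 1 else 0) := by simp

lemma uform_embed2 (f g : ZMod M → ℂ) :
    Uform (2 * M) (embed2 M f) (embed2 M g) = 1 / (2 * M) * ∑ j, starRingEnd ℂ (f j) *
      ((exp (2 * Real.pi * I * j.val / M) + exp (2 * Real.pi * I * ((j.val : ℂ) + 1 / 2) / M)) * g j) := by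
  rw [Uform, ZMod.sum_two_mul]
  congr 1
  · push_cast; rfl
  · refine sum_congr rfl fun j _ => ?_
    have hj := j.val_lt
    rw [embed2_natCast_two_mul, embed2_natCast_two_mul_add_one, embed2_natCast_two_mul,
      embed2_natCast_two_mul_add_one, ZMod.val_natCast_of_lt (by omega),
      ZMod.val_natCast_of_lt (by omega)]
    push_cast
    field_simp

lemma uform_eVec_eVec (m n : ZMod M) :
    Uform M (eVec M m) (eVec M n) =
      exp (2 * Real.pi * I * m.val / M) * (if m = n then 1 else 0) := by
  have hM : (M : ℂ) ≠ 0 := Nat.cast_ne_zero.2 (NeZero.ne M)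
  rw [Uform, sum_conj_eVec_mul_eVec (fun a => exp (2 * Real.pi * I * a.val / M))]
  field_simp

lemma uform_embed2_eVec_eVec (m n : ZMod M) :
    Uform (2 * M) (embed2 M (eVec M m)) (embed2 M (eVec M n)) =
      1 / 2 * (exp (2 * Real.pi * I * m.val / M) +
        exp (2 * Real.pi * I * ((m.val : ℂ) + 1 / 2) / M)) * (if m = n then 1 else 0) := by
  have hM : (M : ℂ) ≠ 0 := Nat.cast_ne_zero.2 (NeZero.ne M)
  rw [uform_embed2, sum_conj_eVec_mul_eVec
    (fun a => exp (2 * Real.pi * I * a.val / M) + exp (2 * Real.pi * I * ((a.val : ℂ) + 1 / 2) / M))]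
  field_simp

lemma exp_two_pi_I_half_div_ne_one : exp (2 * Real.pi * I * (1 / 2) / M) ≠ 1 := by
  have h := isPrimitiveRoot_exp (2 * M) (NeZero.ne _)
  rw [Nat.cast_mul, Nat.cast_two] at h
  convert h.ne_one (by have := NeZero.pos M; omega) using 2
  field_simp

/-- With respect to I^{(2)}_{M→2M}, the multiplication operators Û_M
are NOT weakly cylindrically consistent: the flowed kernel is
(1/2)(e^{2πim/M} + e^{2πi(m+1/2)/M})δ_{mn}, which differs from e^{2πim/M}δ_{mn}. -/
theorem stmt9 (M : ℕ) [NeZero M] :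
    (∀ m n : ZMod M,
      Uform (2 * M) (embed2 M (eVec M m)) (embed2 M (eVec M n)) =
        (1 / 2) * (Complex.exp (2 * Real.pi * Complex.I * m.val / M) +
            Complex.exp (2 * Real.pi * Complex.I * ((m.val : ℂ) + 1 / 2) / M)) *
          (if m = n then 1 else 0)) ∧
    (∀ m n : ZMod M,
      Uform M (eVec M m) (eVec M n) =
        Complex.exp (2 * Real.pi * Complex.I * m.val / M) * (if m = n then 1 else 0)) ∧
    ¬ (∀ m n : ZMod M,
      Uform (2 * M) (embed2 M (eVec M m)) (embed2 M (eVec M n)) =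
        Uform M (eVec M m) (eVec M n)) := by
  refine ⟨uform_embed2_eVec_eVec, uform_eVec_eVec, fun h => exp_two_pi_I_half_div_ne_one (M := M) ?_⟩
  have h₀ := h 0 0
  simp only [uform_embed2_eVec_eVec, uform_eVec_eVec, ZMod.val_zero, Nat.cast_zero, mul_zero, zero_div,
    exp_zero, zero_add, if_true, mul_one] at h₀
  linear_combination 2 * h₀
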